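/- arXiv:2208.08306 — 2 statements merged into one kernel-verified Lean document; each statement's English description precedes it below -/
import Mathlib

section
/- Let N ≥ 1 and m ≥ 1, and consider the slab S_N = {(x,y) ∈ ℤ² : y ≤ x ≤ y + N}. Let p_i = (i,i) and q_i = (⌊i+N/2⌋, ⌈i-N/2⌉). Then any up-right lattice path from p_0 to q_m and any up-right lattice path from q_0 to p_m, both contained in S_N, must share at least one lattice point. -/
/-- An up-right lattice path: consecutive steps are `(1,0)` or `(0,1)`. -/
def UpRight (π : List (ℤ × ℤ)) : Prop :=
  π.Chain' (fun z w => w = z + ((1, 0) : ℤ × ℤ) ∨ w = z + ((0, 1) : ℤ × ℤ))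

/-- `IsPath A u v π`: `π` is an up-right lattice path from `u` to `v` fully contained in `A`. -/
def IsPath (A : Set (ℤ × ℤ)) (u v : ℤ × ℤ) (π : List (ℤ × ℤ)) : Prop :=
  UpRight π ∧ π.head? = some u ∧ π.getLast? = some v ∧ ∀ z ∈ π, z ∈ A

/-- The passage time of a path: sum of the weights along the path, excluding the final site. -/
def pathWeight (ω : ℤ × ℤ → ℝ) (π : List (ℤ × ℤ)) : ℝ :=
  (π.dropLast.map ω).sum

/-- The last passage time from `u` to `v` over up-right paths contained in `A`. -/
noncomputable def LPT (ω : ℤ × ℤ → ℝ) (A : Set (ℤ × ℤ)) (u v : ℤ × ℤ) : ℝ :=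
  sSup {t | ∃ π, IsPath A u v π ∧ pathWeight ω π = t}


/-- The slab `S_N = {(x,y) : y ≤ x ≤ y + N}`. -/
def slab (N : ℕ) : Set (ℤ × ℤ) := {v | v.2 ≤ v.1 ∧ v.1 ≤ v.2 + (N : ℤ)}

/-- The point `p_i = (i, i)` on the upper boundary. -/
def ppt (i : ℤ) : ℤ × ℤ := (i, i)

/-- The point `q_i = (⌊i + N/2⌋, ⌈i - N/2⌉)`. -/
def qpt (N : ℕ) (i : ℤ) : ℤ × ℤ := (i + ((N / 2 : ℕ) : ℤ), i - ((N / 2 : ℕ) : ℤ))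

/-! Along an up-right path the antidiagonal index `x + y` increases by one per step, so two paths
whose endpoints lie on common antidiagonals have the same length and can be compared step by step.
On a common antidiagonal a point is determined by its `x`-coordinate, and the `x`-coordinates of the
two paths move by at most one per step. The path that starts weakly to the left of the other but
ends weakly to its right therefore meets it: while strictly to the left it can gain at most one
column per step, so it cannot jump over the other path. -/

lemma eq_of_fst_eq_of_add_eq {z w : ℤ × ℤ} (hx : z.1 = w.1) (hs : z.1 + z.2 = w.1 + w.2) :
    z = w :=
  Prod.ext hx (by omega)

lemma UpRight.cons_cons {a b : ℤ × ℤ} {l : List (ℤ × ℤ)} (h : UpRight (a :: b :: l)) :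
    (b = a + (1, 0) ∨ b = a + (0, 1)) ∧ UpRight (b :: l) :=
  List.isChain_cons_cons.mp h

lemma UpRight.fst_le_and_add_eq {a b : ℤ × ℤ} {l : List (ℤ × ℤ)}
    (h : UpRight (a :: b :: l)) :
    a.1 ≤ b.1 ∧ b.1 ≤ a.1 + 1 ∧ b.1 + b.2 = a.1 + a.2 + 1 := by
  rcases h.cons_cons.1 with rfl | rfl <;> simp only [Prod.fst_add, Prod.snd_add] <;> omega

lemma UpRight.getLast_add {a : ℤ × ℤ} {l : List (ℤ × ℤ)} (h : UpRight (a :: l)) :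
    ((a :: l).getLast (List.cons_ne_nil a l)).1 + ((a :: l).getLast (List.cons_ne_nil a l)).2
      = a.1 + a.2 + l.length := by
  induction l generalizing a with
  | nil => simp
  | cons b l ih =>
    rw [List.getLast_cons_cons, ih h.cons_cons.2, List.length_cons]
    have := h.fst_le_and_add_eq
    push_cast
    omega

theorem UpRight.exists_mem_of_crossing {a b : ℤ × ℤ} {l l' : List (ℤ × ℤ)}
    (h : UpRight (a :: l)) (h' : UpRight (b :: l')) (hlen : l.length = l'.length)
    (hdiag : a.1 + a.2 = b.1 + b.2) (hstart : a.1 ≤ b.1)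
    (hend : ((b :: l').getLast (List.cons_ne_nil b l')).1
      ≤ ((a :: l).getLast (List.cons_ne_nil a l)).1) :
    ∃ z, z ∈ a :: l ∧ z ∈ b :: l' := by
  induction l generalizing a b l' with
  | nil =>
    obtain rfl : l' = [] := List.eq_nil_of_length_eq_zero hlen.symm
    rw [eq_of_fst_eq_of_add_eq (le_antisymm hstart hend) hdiag]
    exact ⟨b, List.mem_singleton_self b, List.mem_singleton_self b⟩
  | cons c l ih =>
    obtain _ | ⟨d, l'⟩ := l'
    · simp at hlen
    by_cases hab : a.1 = b.1
    · rw [eq_of_fst_eq_of_add_eq hab hdiag]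
      exact ⟨b, List.mem_cons_self, List.mem_cons_self⟩
    have hac := h.fst_le_and_add_eq
    have hbd := h'.fst_le_and_add_eq
    rw [List.getLast_cons_cons, List.getLast_cons_cons] at hend
    obtain ⟨z, hz, hz'⟩ := ih h.cons_cons.2 h'.cons_cons.2 (by simpa using hlen) (by omega)
      (by omega) hend
    exact ⟨z, List.mem_cons_of_mem a hz, List.mem_cons_of_mem b hz'⟩

lemma IsPath.exists_eq_cons {A : Set (ℤ × ℤ)} {u v : ℤ × ℤ} {π : List (ℤ × ℤ)}
    (h : IsPath A u v π) :
    ∃ l, π = u :: l ∧ UpRight (u :: l) ∧ (u :: l).getLast (List.cons_ne_nil u l) = v := by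
  obtain ⟨hup, hhead, hlast, -⟩ := h
  obtain ⟨l, rfl⟩ := List.head?_eq_some_iff.mp hhead
  exact ⟨l, rfl, hup, by simpa [List.getLast?_eq_some_getLast] using hlast⟩

theorem IsPath.exists_mem_of_crossing {A B : Set (ℤ × ℤ)} {u v u' v' : ℤ × ℤ}
    {π π' : List (ℤ × ℤ)} (h : IsPath A u v π) (h' : IsPath B u' v' π')
    (hu : u.1 + u.2 = u'.1 + u'.2) (hv : v.1 + v.2 = v'.1 + v'.2)
    (hstart : u.1 ≤ u'.1) (hend : v'.1 ≤ v.1) :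
    ∃ z, z ∈ π ∧ z ∈ π' := by
  obtain ⟨l, rfl, hup, hlast⟩ := h.exists_eq_cons
  obtain ⟨l', rfl, hup', hlast'⟩ := h'.exists_eq_cons
  have hlen : l.length = l'.length := by
    have hv₁ := hup.getLast_add
    have hv₂ := hup'.getLast_add
    rw [hlast] at hv₁
    rw [hlast'] at hv₂
    omega
  exact hup.exists_mem_of_crossing hup' hlen hu hstart (by rwa [hlast, hlast'])

theorem stmt_6_general (N : ℕ) (m : ℤ)
    (π₁ π₂ : List (ℤ × ℤ))
    (h1 : IsPath (slab N) (ppt 0) (qpt N m) π₁)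
    (h2 : IsPath (slab N) (qpt N 0) (ppt m) π₂) :
    ∃ z, z ∈ π₁ ∧ z ∈ π₂ :=
  h1.exists_mem_of_crossing h2 (by simp only [ppt, qpt]; omega) (by simp only [ppt, qpt]; omega)
    (by simp only [ppt, qpt]; omega) (by simp only [ppt, qpt]; omega)

/-- Any up-right lattice path in the slab from `p_0` to `q_m` and any up-right lattice
path in the slab from `q_0` to `p_m` must share at least one lattice point. -/
theorem stmt_6 (N : ℕ) (hN : 1 ≤ N) (m : ℤ) (hm : 1 ≤ m)
    (π₁ π₂ : List (ℤ × ℤ))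
    (h1 : IsPath (slab N) (ppt 0) (qpt N m) π₁)
    (h2 : IsPath (slab N) (qpt N 0) (ppt m) π₂) :
    ∃ z, z ∈ π₁ ∧ z ∈ π₂ :=
  stmt_6_general N m π₁ π₂ h1 h2
end

section
/- Let β > 0, M ∈ ℕ, and δ ∈ ℝ with |δ| ≤ 1/2. Let X = (X₁,…,X_M) be i.i.d. Exponential(β) and X^δ = ((1+δ)X₁,…,(1+δ)X_M). Then the total variation distance between the laws of X and X^δ satisfies ‖X - X^δ‖_TV ≤ √(M/2) · |δ|. Moreover, if Mδ² ≤ ε² then ‖X - X^δ‖_TV ≤ c (M ε²)^{1/4} for a universal constant c (for |δ| ≤ ε). -/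
/-!
The law of `(1 + δ) X₁` is `Exp(γ)` with `γ = β / (1 + δ)`, which has density
`g y = (γ / β) e^{(β - γ) y}` with respect to `Exp(β)`. Instead of KL divergence and Pinsker we
go through the Hellinger affinity `ρ = ∫ √g`: writing `|1 - g| = |1 - √g| (1 + √g)`,
Cauchy–Schwarz gives `‖μ - g μ‖_TV ≤ √(1 - ρ²)`. The affinity is multiplicative over independent
coordinates, and for one coordinate `ρ² = 1 - (δ / (2 + δ))²`, so Bernoulli's inequality gives
`1 - ρ^{2M} ≤ M δ² / (2 + δ)² ≤ M δ² / 2`. The second bound follows (with `c = 1`) from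
`‖X - X^δ‖_TV ≤ min(1, √(M δ² / 2)) ≤ (M ε²)^{1/4}`.
-/

open MeasureTheory ProbabilityTheory

/-- Total variation distance between two measures. -/
noncomputable def tvDist {Ω : Type*} [MeasurableSpace Ω] (μ ν : Measure Ω) : ℝ :=
  ⨆ A : {A : Set Ω // MeasurableSet A}, |(μ A.1).toReal - (ν A.1).toReal|

/-- The law of a vector of `M` i.i.d. Exponential(β) random variables. -/
noncomputable def lawX (β : ℝ) (M : ℕ) : Measure (Fin M → ℝ) :=
  Measure.pi (fun _ => expMeasure β)

/-- The law of the perturbed vector `X^δ = ((1+δ)X₁, …, (1+δ)X_M)`. -/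
noncomputable def lawXdelta (β : ℝ) (M : ℕ) (δ : ℝ) : Measure (Fin M → ℝ) :=
  (lawX β M).map (fun x i => (1 + δ) * x i)

open scoped ENNReal

namespace MeasureTheory

theorem lintegral_fin_nat_prod_eq_prod {n : ℕ} {α : Type*}
    [MeasurableSpace α] {μ : Fin n → Measure α} [∀ i, SigmaFinite (μ i)]
    {f : Fin n → α → ℝ≥0∞} (hf : ∀ i, Measurable (f i)) :
    ∫⁻ x : Fin n → α, ∏ i, f i (x i) ∂(Measure.pi μ) = ∏ i, ∫⁻ x, f i x ∂(μ i) := by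
  induction n with
  | zero => simp
  | succ n ih =>
    have hprod : Measurable fun x : Fin (n + 1) → α => ∏ i, f i (x i) :=
      Finset.measurable_prod _ fun i _ => (hf i).comp (measurable_pi_apply i)
    rw [← ((measurePreserving_piFinSuccAbove μ 0).symm).lintegral_comp hprod]
    simp_rw [MeasurableEquiv.piFinSuccAbove_symm_apply, Fin.insertNthEquiv,
      Fin.prod_univ_succ, Fin.insertNth_zero, Equiv.coe_fn_mk, Fin.zero_succAbove,
      Fin.cons_zero, Fin.cons_succ, cast_eq]
    rw [lintegral_prod_mul (f := f 0) (g := fun y : Fin n → α => ∏ j, f j.succ (y j))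
      (hf 0).aemeasurable (Finset.measurable_prod _ fun j _ =>
        (hf j.succ).comp (measurable_pi_apply j)).aemeasurable, ih fun j => hf j.succ]

theorem lintegral_fintype_prod_eq_prod {ι α : Type*} [Fintype ι] [MeasurableSpace α]
    {μ : ι → Measure α} [∀ i, SigmaFinite (μ i)]
    {f : ι → α → ℝ≥0∞} (hf : ∀ i, Measurable (f i)) :
    ∫⁻ x : ι → α, ∏ i, f i (x i) ∂(Measure.pi μ) = ∏ i, ∫⁻ x, f i x ∂(μ i) := by
  let e := (Fintype.equivFin ι).symm
  rw [← (measurePreserving_piCongrLeft _ e).lintegral_comp_emb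
    (MeasurableEquiv.measurableEmbedding _)]
  simp_rw [← e.prod_comp, MeasurableEquiv.coe_piCongrLeft, Equiv.piCongrLeft_apply_apply]
  exact lintegral_fin_nat_prod_eq_prod (f := fun i => f (e i)) fun i => hf (e i)

theorem Measure.pi_withDensity {ι α : Type*} [Fintype ι] [MeasurableSpace α]
    (μ : ι → Measure α) [∀ i, SigmaFinite (μ i)]
    {f : ι → α → ℝ≥0∞} (hf : ∀ i, Measurable (f i))
    [∀ i, SigmaFinite ((μ i).withDensity (f i))] :
    Measure.pi (fun i => (μ i).withDensity (f i))
      = (Measure.pi μ).withDensity fun x => ∏ i, f i (x i) := by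
  refine Measure.pi_eq fun s hs => ?_
  have hind : (Set.univ.pi s).indicator (fun x => ∏ i, f i (x i))
      = fun x => ∏ i, (s i).indicator (f i) (x i) := by
    ext x
    by_cases hx : x ∈ Set.univ.pi s
    · rw [Set.indicator_of_mem hx]
      exact Finset.prod_congr rfl fun i _ => (Set.indicator_of_mem (hx i trivial) _).symm
    · obtain ⟨i, hi⟩ := by simpa using hx
      rw [Set.indicator_of_notMem hx]
      exact (Finset.prod_eq_zero (Finset.mem_univ i) (Set.indicator_of_notMem hi _)).symm
  rw [withDensity_apply _ (MeasurableSet.univ_pi hs),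
    ← lintegral_indicator (MeasurableSet.univ_pi hs), hind,
    lintegral_fintype_prod_eq_prod fun i => (hf i).indicator (hs i)]
  exact Finset.prod_congr rfl fun i _ => by
    rw [withDensity_apply _ (hs i), lintegral_indicator (hs i)]

end MeasureTheory

section Hellinger

variable {Ω : Type*} [MeasurableSpace Ω] {μ : Measure Ω}

theorem integral_mul_le_sqrt_mul_sqrt {f g : Ω → ℝ} (hf0 : 0 ≤ᵐ[μ] f) (hg0 : 0 ≤ᵐ[μ] g)
    (hf : MemLp f 2 μ) (hg : MemLp g 2 μ) :
    ∫ x, f x * g x ∂μ ≤ √(∫ x, f x ^ 2 ∂μ) * √(∫ x, g x ^ 2 ∂μ) := by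
  have h2 : ENNReal.ofReal 2 = 2 := by norm_num
  have hH := integral_mul_le_Lp_mul_Lq_of_nonneg Real.HolderConjugate.two_two
    hf0 hg0 (h2 ▸ hf) (h2 ▸ hg)
  simpa only [← Real.sqrt_eq_rpow, Real.rpow_two] using hH

theorem measureReal_withDensity_ofReal {g : Ω → ℝ} (hg : Measurable g) (hg0 : ∀ x, 0 ≤ g x)
    {s : Set Ω} (hs : MeasurableSet s) :
    (μ.withDensity fun x => ENNReal.ofReal (g x)).real s = ∫ x in s, g x ∂μ := by
  rw [measureReal_def, withDensity_apply _ hs,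
    integral_eq_lintegral_of_nonneg_ae (ae_of_all _ hg0) hg.aestronglyMeasurable]

variable [IsProbabilityMeasure μ]

theorem integral_abs_one_sub_sq_le {h : Ω → ℝ} (h0 : ∀ x, 0 ≤ h x) (hL2 : MemLp h 2 μ)
    (hnorm : ∫ x, h x ^ 2 ∂μ = 1) :
    ∫ x, |1 - h x ^ 2| ∂μ ≤ 2 * √(1 - (∫ x, h x ∂μ) ^ 2) := by
  set ρ := ∫ x, h x ∂μ
  have hint : Integrable h μ := hL2.integrable one_le_two
  have hsq : Integrable (fun x => h x ^ 2) μ := hL2.integrable_sq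
  have hminus : ∫ x, (1 - h x) ^ 2 ∂μ = 2 - 2 * ρ := by
    simp_rw [sub_sq, one_pow, mul_one]
    rw [integral_add (f := fun x => 1 - 2 * h x) ((integrable_const 1).sub (hint.const_mul 2)) hsq,
      integral_sub (integrable_const 1) (hint.const_mul 2), integral_const_mul, hnorm,
      integral_const, probReal_univ, smul_eq_mul, mul_one]
    ring
  have hplus : ∫ x, (1 + h x) ^ 2 ∂μ = 2 + 2 * ρ := by
    simp_rw [add_sq, one_pow, mul_one]
    rw [integral_add (f := fun x => 1 + 2 * h x) ((integrable_const 1).add (hint.const_mul 2)) hsq,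
      integral_add (integrable_const 1) (hint.const_mul 2), integral_const_mul, hnorm,
      integral_const, probReal_univ, smul_eq_mul, mul_one]
    ring
  have hρ0 : 0 ≤ ρ := integral_nonneg h0
  have hpos : ∀ x, 0 ≤ 1 + h x := fun x => by linarith [h0 x]
  have hCS : ∫ x, |1 - h x| * (1 + h x) ∂μ ≤ √(2 - 2 * ρ) * √(2 + 2 * ρ) := by
    have hm : MemLp (fun x => 1 - h x) 2 μ := (memLp_const (1 : ℝ)).sub hL2
    have hp : MemLp (fun x => 1 + h x) 2 μ := (memLp_const (1 : ℝ)).add hL2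
    have := integral_mul_le_sqrt_mul_sqrt (ae_of_all _ fun x => abs_nonneg (1 - h x))
      (ae_of_all _ hpos) hm.norm hp
    simpa only [Real.norm_eq_abs, sq_abs, hminus, hplus] using this
  calc ∫ x, |1 - h x ^ 2| ∂μ = ∫ x, |1 - h x| * (1 + h x) ∂μ := by
        refine integral_congr_ae (ae_of_all _ fun x => ?_)
        simp only [show 1 - h x ^ 2 = (1 - h x) * (1 + h x) by ring, abs_mul,
          abs_of_nonneg (hpos x)]
    _ ≤ √(2 - 2 * ρ) * √(2 + 2 * ρ) := hCS
    _ = 2 * √(1 - ρ ^ 2) := by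
        rw [← Real.sqrt_mul' _ (by linarith),
          show (2 - 2 * ρ) * (2 + 2 * ρ) = 2 ^ 2 * (1 - ρ ^ 2) by ring,
          Real.sqrt_mul (by norm_num), Real.sqrt_sq (by norm_num)]

theorem abs_measureReal_sub_withDensity_le {g : Ω → ℝ} (hg : Measurable g) (hg0 : ∀ x, 0 ≤ g x)
    [IsProbabilityMeasure (μ.withDensity fun x => ENNReal.ofReal (g x))]
    {A : Set Ω} (hA : MeasurableSet A) :
    |μ.real A - (μ.withDensity fun x => ENNReal.ofReal (g x)).real A|
      ≤ √(1 - (∫ x, √(g x) ∂μ) ^ 2) := by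
  set ν := μ.withDensity fun x => ENNReal.ofReal (g x)
  have hg1 : ∫ x, g x ∂μ = 1 := by
    rw [← setIntegral_univ, ← measureReal_withDensity_ofReal hg hg0 MeasurableSet.univ,
      probReal_univ]
  have hgi : Integrable g μ := Integrable.of_integral_ne_zero (by rw [hg1]; exact one_ne_zero)
  have hdiff : Integrable (fun x => 1 - g x) μ := (integrable_const 1).sub hgi
  have hset : ∀ s, MeasurableSet s → |μ.real s - ν.real s| ≤ ∫ x in s, |1 - g x| ∂μ := by
    intro s hs
    calc |μ.real s - ν.real s| = |∫ x in s, (1 - g x) ∂μ| := by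
          rw [measureReal_withDensity_ofReal hg hg0 hs,
            integral_sub (integrable_const 1) hgi.integrableOn, setIntegral_const, smul_eq_mul,
            mul_one]
      _ ≤ ∫ x in s, |1 - g x| ∂μ := abs_integral_le_integral_abs
  -- The deviations on `A` and on `Aᶜ` agree, so each is at most half of `∫ |1 - g| ∂μ`.
  have hcompl : |μ.real Aᶜ - ν.real Aᶜ| = |μ.real A - ν.real A| := by
    rw [probReal_compl_eq_one_sub hA, probReal_compl_eq_one_sub hA, ← abs_neg]
    ring_nf
  have hL1 : ∫ x, |1 - √(g x) ^ 2| ∂μ ≤ 2 * √(1 - (∫ x, √(g x) ∂μ) ^ 2) := by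
    refine integral_abs_one_sub_sq_le (fun x => Real.sqrt_nonneg _) ?_ ?_
    · refine (memLp_two_iff_integrable_sq hg.sqrt.aestronglyMeasurable).2 ?_
      simpa only [Real.sq_sqrt (hg0 _)] using hgi
    · simpa only [Real.sq_sqrt (hg0 _)] using hg1
  simp only [Real.sq_sqrt (hg0 _)] at hL1
  have := integral_add_compl hA hdiff.abs
  linarith [hset A hA, hset Aᶜ hA.compl]

end Hellinger

theorem tvDist_withDensity_le {Ω : Type*} [MeasurableSpace Ω] {μ : Measure Ω}
    [IsProbabilityMeasure μ] {g : Ω → ℝ} (hg : Measurable g) (hg0 : ∀ x, 0 ≤ g x)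
    [IsProbabilityMeasure (μ.withDensity fun x => ENNReal.ofReal (g x))] :
    tvDist μ (μ.withDensity fun x => ENNReal.ofReal (g x)) ≤ √(1 - (∫ x, √(g x) ∂μ) ^ 2) :=
  Real.iSup_le (fun A => abs_measureReal_sub_withDensity_le hg hg0 A.2) (Real.sqrt_nonneg _)

theorem tvDist_le_one {Ω : Type*} [MeasurableSpace Ω] (μ ν : Measure Ω) [IsProbabilityMeasure μ]
    [IsProbabilityMeasure ν] : tvDist μ ν ≤ 1 :=
  Real.iSup_le (fun A => abs_sub_le_of_nonneg_of_le measureReal_nonneg measureReal_le_one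
    measureReal_nonneg measureReal_le_one |>.trans (by simp)) zero_le_one

namespace ProbabilityTheory

theorem expMeasure_eq_withDensity (r : ℝ) :
    expMeasure r = volume.withDensity (exponentialPDF r) := rfl

theorem measurable_exponentialPDF (r : ℝ) : Measurable (exponentialPDF r) :=
  (measurable_exponentialPDFReal r).ennreal_ofReal

theorem expMeasure_Iic {r : ℝ} (hr : 0 < r) (x : ℝ) :
    expMeasure r (Set.Iic x) = ENNReal.ofReal (if 0 ≤ x then 1 - Real.exp (-(r * x)) else 0) := by
  rw [expMeasure_eq_withDensity, withDensity_apply _ measurableSet_Iic,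
    lintegral_exponentialPDF_eq_antiDeriv hr]

theorem expMeasure_map_const_mul {β c : ℝ} (hβ : 0 < β) (hc : 0 < c) :
    (expMeasure β).map (c * ·) = expMeasure (β / c) := by
  have := isProbabilityMeasure_expMeasure hβ
  have := isProbabilityMeasure_expMeasure (div_pos hβ hc)
  have : IsProbabilityMeasure ((expMeasure β).map (c * ·)) :=
    Measure.isProbabilityMeasure_map (measurable_const_mul c).aemeasurable
  refine Measure.ext_of_Iic _ _ fun a => ?_
  have hpre : (c * ·) ⁻¹' Set.Iic a = Set.Iic (a / c) := by
    ext y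
    simp only [Set.mem_preimage, Set.mem_Iic, le_div_iff₀ hc, mul_comm]
  rw [Measure.map_apply (measurable_const_mul c) measurableSet_Iic, hpre,
    expMeasure_Iic hβ, expMeasure_Iic (div_pos hβ hc)]
  have hsign : 0 ≤ a / c ↔ 0 ≤ a := by rw [le_div_iff₀ hc, zero_mul]
  simp only [hsign]
  congr 4
  field_simp

theorem exponentialPDF_mul_ofReal_exp {r s c : ℝ} (hr : 0 ≤ r) (hsr : s < r) (hc : 0 ≤ c)
    (y : ℝ) :
    exponentialPDF r y * ENNReal.ofReal (c * Real.exp (s * y))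
      = ENNReal.ofReal (c * r / (r - s)) * exponentialPDF (r - s) y := by
  rcases lt_or_ge y 0 with hy | hy
  · simp [exponentialPDF_of_neg hy]
  · have hrs : r - s ≠ 0 := (sub_pos.2 hsr).ne'
    rw [exponentialPDF_of_nonneg hy, exponentialPDF_of_nonneg hy,
      ← ENNReal.ofReal_mul (by positivity), ← ENNReal.ofReal_mul (by positivity)]
    congr 1
    have hexp : Real.exp (-(r * y)) * Real.exp (s * y) = Real.exp (-((r - s) * y)) := by
      rw [← Real.exp_add]; ring_nf
    rw [← hexp]
    field_simp

theorem expMeasure_withDensity_ofReal_exp {r s c : ℝ} (hr : 0 ≤ r) (hsr : s < r) (hc : 0 ≤ c) :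
    (expMeasure r).withDensity (fun y => ENNReal.ofReal (c * Real.exp (s * y)))
      = ENNReal.ofReal (c * r / (r - s)) • expMeasure (r - s) := by
  rw [expMeasure_eq_withDensity, expMeasure_eq_withDensity,
    ← withDensity_mul _ (measurable_exponentialPDF r) (by fun_prop),
    ← withDensity_smul _ (measurable_exponentialPDF _)]
  congr 1
  funext y
  exact exponentialPDF_mul_ofReal_exp hr hsr hc y

theorem integral_mul_exp_expMeasure {r s c : ℝ} (hr : 0 ≤ r) (hsr : s < r) (hc : 0 ≤ c) :
    ∫ y, c * Real.exp (s * y) ∂expMeasure r = c * r / (r - s) := by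
  have := isProbabilityMeasure_expMeasure (sub_pos.2 hsr)
  rw [integral_eq_lintegral_of_nonneg_ae (ae_of_all _ fun y => by positivity) (by fun_prop),
    ← setLIntegral_univ, ← withDensity_apply _ MeasurableSet.univ,
    expMeasure_withDensity_ofReal_exp hr hsr hc, Measure.smul_apply, measure_univ, smul_eq_mul,
    mul_one, ENNReal.toReal_ofReal (div_nonneg (mul_nonneg hc hr) (sub_pos.2 hsr).le)]

/-- The density of `expMeasure γ` with respect to `expMeasure β`. It is not cut off at `0`:
only its values on `[0, ∞)`, where `expMeasure β` lives, matter. -/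
noncomputable def expDensityRatio (β γ y : ℝ) : ℝ := γ / β * Real.exp ((β - γ) * y)

@[fun_prop]
theorem measurable_expDensityRatio (β γ : ℝ) : Measurable (expDensityRatio β γ) := by
  unfold expDensityRatio
  fun_prop

theorem expDensityRatio_nonneg {β γ : ℝ} (hβ : 0 < β) (hγ : 0 < γ) (y : ℝ) :
    0 ≤ expDensityRatio β γ y := by
  unfold expDensityRatio
  positivity

theorem withDensity_expDensityRatio {β γ : ℝ} (hβ : 0 < β) (hγ : 0 < γ) :
    (expMeasure β).withDensity (fun y => ENNReal.ofReal (expDensityRatio β γ y))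
      = expMeasure γ := by
  simp only [expDensityRatio]
  rw [expMeasure_withDensity_ofReal_exp hβ.le (by linarith) (by positivity),
    sub_sub_cancel, div_mul_cancel₀ _ hβ.ne', div_self hγ.ne', ENNReal.ofReal_one, one_smul]

theorem sq_integral_sqrt_expDensityRatio {β γ : ℝ} (hβ : 0 < β) (hγ : 0 < γ) :
    (∫ y, √(expDensityRatio β γ y) ∂expMeasure β) ^ 2 = 1 - ((β - γ) / (β + γ)) ^ 2 := by
  have hsqrt : ∀ y, √(expDensityRatio β γ y) = √(γ / β) * Real.exp ((β - γ) / 2 * y) := by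
    intro y
    rw [expDensityRatio, Real.sqrt_mul (by positivity), ← Real.exp_half]
    ring_nf
  simp_rw [hsqrt]
  rw [integral_mul_exp_expMeasure hβ.le (by linarith) (Real.sqrt_nonneg _), div_pow, mul_pow,
    Real.sq_sqrt (by positivity), show β - (β - γ) / 2 = (β + γ) / 2 by ring]
  have : β + γ ≠ 0 := by positivity
  field_simp
  ring

end ProbabilityTheory

theorem isProbabilityMeasure_lawX {β : ℝ} (hβ : 0 < β) (M : ℕ) :
    IsProbabilityMeasure (lawX β M) := by
  have := isProbabilityMeasure_expMeasure hβ
  unfold lawX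
  infer_instance

theorem isProbabilityMeasure_lawXdelta {β : ℝ} (hβ : 0 < β) (M : ℕ) (δ : ℝ) :
    IsProbabilityMeasure (lawXdelta β M δ) := by
  have := isProbabilityMeasure_lawX hβ M
  exact Measure.isProbabilityMeasure_map
    (measurable_pi_lambda _ fun i => (measurable_pi_apply i).const_mul _).aemeasurable

theorem lawXdelta_eq_pi {β δ : ℝ} (hβ : 0 < β) (hδ : -1 < δ) (M : ℕ) :
    lawXdelta β M δ = Measure.pi fun _ : Fin M => expMeasure (β / (1 + δ)) := by
  have := isProbabilityMeasure_expMeasure hβ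
  have := isProbabilityMeasure_expMeasure (div_pos hβ (by linarith : 0 < 1 + δ))
  exact (measurePreserving_pi (fun _ : Fin M => expMeasure β) _ fun _ =>
    ⟨measurable_const_mul _, expMeasure_map_const_mul hβ (by linarith)⟩).map_eq

theorem lawXdelta_eq_withDensity {β δ : ℝ} (hβ : 0 < β) (hδ : -1 < δ) (M : ℕ) :
    lawXdelta β M δ = (lawX β M).withDensity
      fun x => ENNReal.ofReal (∏ i, expDensityRatio β (β / (1 + δ)) (x i)) := by
  have hγ : 0 < β / (1 + δ) := div_pos hβ (by linarith)
  have := isProbabilityMeasure_expMeasure hβ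
  rw [lawXdelta_eq_pi hβ hδ, ← withDensity_expDensityRatio hβ hγ,
    Measure.pi_withDensity _ fun _ => by fun_prop]
  simp only [lawX, ENNReal.ofReal_prod_of_nonneg fun i _ => expDensityRatio_nonneg hβ hγ _]

theorem integral_sqrt_prod_expDensityRatio {β γ : ℝ} (hβ : 0 < β) (hγ : 0 < γ) (M : ℕ) :
    ∫ x, √(∏ i, expDensityRatio β γ (x i)) ∂lawX β M
      = (∫ y, √(expDensityRatio β γ y) ∂expMeasure β) ^ M := by
  have := isProbabilityMeasure_expMeasure hβ
  simp_rw [Real.sqrt_prod _ fun i _ => expDensityRatio_nonneg hβ hγ _]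
  rw [lawX, integral_fintype_prod_eq_pow (fun y => √(expDensityRatio β γ y)), Fintype.card_fin]

theorem one_sub_pow_le_mul_one_sub {a : ℝ} (ha : 0 ≤ a) (n : ℕ) : 1 - a ^ n ≤ n * (1 - a) := by
  have := one_add_mul_sub_le_pow (by linarith : -1 ≤ a) n
  linarith

theorem tvDist_lawX_lawXdelta_le {β δ : ℝ} (hβ : 0 < β) (hδ : |δ| ≤ 1 / 2) (M : ℕ) :
    tvDist (lawX β M) (lawXdelta β M δ) ≤ √(M * δ ^ 2 / 2) := by
  obtain ⟨hδl, hδu⟩ := abs_le.1 hδ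
  have hδ1 : -1 < δ := by linarith
  set γ := β / (1 + δ)
  have hγ : 0 < γ := div_pos hβ (by linarith)
  have := isProbabilityMeasure_lawX hβ M
  have := isProbabilityMeasure_lawXdelta hβ M δ
  rw [lawXdelta_eq_withDensity hβ hδ1] at this ⊢
  set ρ := ∫ y, √(expDensityRatio β γ y) ∂expMeasure β
  have hρ : ρ ^ 2 = 1 - (δ / (2 + δ)) ^ 2 := by
    have h1 : 1 + δ ≠ 0 := by linarith
    have h2 : 2 + δ ≠ 0 := by linarith
    have hratio : (β - γ) / (β + γ) = δ / (2 + δ) := by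
      rw [show γ = β / (1 + δ) from rfl, div_eq_div_iff (by positivity) h2]
      field_simp
      ring
    rw [sq_integral_sqrt_expDensityRatio hβ hγ, hratio]
  have hTV := tvDist_withDensity_le (μ := lawX β M)
    (g := fun x => ∏ i, expDensityRatio β γ (x i))
    (Finset.measurable_prod _ fun i _ =>
      (measurable_expDensityRatio β γ).comp (measurable_pi_apply i))
    (fun x => Finset.prod_nonneg fun i _ => expDensityRatio_nonneg hβ hγ (x i))
  rw [integral_sqrt_prod_expDensityRatio hβ hγ] at hTV
  refine hTV.trans (Real.sqrt_le_sqrt ?_)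
  have hsmall : (δ / (2 + δ)) ^ 2 ≤ δ ^ 2 / 2 := by
    rw [div_pow, div_le_div_iff₀ (pow_pos (by linarith) 2) two_pos]
    nlinarith [sq_nonneg δ]
  calc 1 - (ρ ^ M) ^ 2 = 1 - (ρ ^ 2) ^ M := by rw [← pow_mul, ← pow_mul, mul_comm]
    _ ≤ M * (1 - ρ ^ 2) := one_sub_pow_le_mul_one_sub (sq_nonneg ρ) M
    _ ≤ M * δ ^ 2 / 2 := by
      rw [hρ, mul_div_assoc]
      exact mul_le_mul_of_nonneg_left (by linarith) M.cast_nonneg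

theorem le_rpow_one_div_four {x s : ℝ} (hs : 0 ≤ s) (h1 : x ≤ 1) (h2 : x ≤ √s) :
    x ≤ s ^ (1 / 4 : ℝ) := by
  rcases le_total s 1 with hs1 | hs1
  · rw [Real.sqrt_eq_rpow] at h2
    exact h2.trans (Real.rpow_le_rpow_of_exponent_ge' hs hs1 (by norm_num) (by norm_num))
  · exact h1.trans (Real.one_le_rpow hs1 (by norm_num))

/-- Mermin–Wagner style perturbation lemma: for i.i.d. Exponential(β) vectors,
`‖X - X^δ‖_TV ≤ √(M/2)·|δ|`; moreover there is a universal constant `c > 0` such that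
if `|δ| ≤ ε` and `Mδ² ≤ ε²` then `‖X - X^δ‖_TV ≤ c (M ε²)^{1/4}`. -/
theorem stmt_13 :
    (∀ (β : ℝ) (M : ℕ) (δ : ℝ), 0 < β → |δ| ≤ 1/2 →
      tvDist (lawX β M) (lawXdelta β M δ) ≤ Real.sqrt (M / 2) * |δ|) ∧
    (∃ c : ℝ, 0 < c ∧ ∀ (β : ℝ) (M : ℕ) (δ ε : ℝ), 0 < β → |δ| ≤ 1/2 → 0 < ε →
      |δ| ≤ ε → (M : ℝ) * δ^2 ≤ ε^2 →
      tvDist (lawX β M) (lawXdelta β M δ) ≤ c * ((M : ℝ) * ε^2) ^ ((1 : ℝ)/4)) := by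
  refine ⟨fun β M δ hβ hδ => ?_, ⟨1, one_pos, fun β M δ ε hβ hδ _ hδε _ => ?_⟩⟩
  · calc tvDist (lawX β M) (lawXdelta β M δ) ≤ √(M * δ ^ 2 / 2) :=
          tvDist_lawX_lawXdelta_le hβ hδ M
      _ = √(M / 2) * |δ| := by
          rw [← Real.sqrt_sq_eq_abs, ← Real.sqrt_mul (by positivity)]
          ring_nf
  · have := isProbabilityMeasure_lawX hβ M
    have := isProbabilityMeasure_lawXdelta hβ M δ
    have hδε2 : δ ^ 2 ≤ ε ^ 2 := sq_le_sq' (abs_le.1 hδε).1 (abs_le.1 hδε).2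
    rw [one_mul]
    refine (le_rpow_one_div_four (by positivity) (tvDist_le_one _ _)
      (tvDist_lawX_lawXdelta_le hβ hδ M)).trans (Real.rpow_le_rpow (by positivity) ?_ (by norm_num))
    nlinarith [M.cast_nonneg (α := ℝ)]
end
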